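/- arXiv:2105.00316 — 4 statements merged into one kernel-verified Lean document; each statement's English description precedes it below -/
import Mathlib

section
/- For any c > 0, the function f(x) = x · arctan(1/x^c) is concave on the interval [0,1] (with f(0) := 0). -/
/-!
Since `arctan (x⁻ᶜ) = π / 2 - arctan (xᶜ)` for `x > 0`, the function equals
`π / 2 · x - x · arctan (xᶜ)` on `[0, 1]`, so it suffices that `g x = x · arctan (xᶜ)` is convex
there. Now `g' x = φ (xᶜ)` with `φ t = arctan t + c · t / (1 + t²)`, which is monotone for
`t ∈ [0, 1]`; hence `g'` is monotone on `(0, 1)`.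
-/

open Real Set

lemma monotoneOn_div_one_add_sq : MonotoneOn (fun t : ℝ => t / (1 + t ^ 2)) (Icc (-1) 1) := by
  intro s ⟨hs₁, hs₂⟩ t ⟨ht₁, ht₂⟩ hst
  have hst_le_one : s * t ≤ 1 := by nlinarith
  dsimp only
  rw [div_le_div_iff₀ (by positivity) (by positivity)]
  -- `t (1 + s²) - s (1 + t²) = (t - s) (1 - s t)`
  nlinarith [mul_nonneg (sub_nonneg.2 hst) (sub_nonneg.2 hst_le_one)]

lemma arctan_rpow_neg {x : ℝ} (hx : 0 < x) (c : ℝ) :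
    arctan (x ^ (-c)) = π / 2 - arctan (x ^ c) := by
  rw [rpow_neg hx.le, arctan_inv_of_pos (rpow_pos_of_pos hx c)]

lemma mul_arctan_rpow_neg_eq {x : ℝ} (hx : 0 ≤ x) (c : ℝ) :
    x * arctan (x ^ (-c)) = π / 2 * x - x * arctan (x ^ c) := by
  rcases hx.eq_or_lt with rfl | hx
  · simp
  · rw [arctan_rpow_neg hx]
    ring

lemma hasDerivAt_mul_arctan_rpow {x : ℝ} (hx : 0 < x) (c : ℝ) :
    HasDerivAt (fun x : ℝ => x * arctan (x ^ c))
      (arctan (x ^ c) + c * (x ^ c / (1 + (x ^ c) ^ 2))) x := by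
  refine ((hasDerivAt_id' x).mul
    (hasDerivAt_rpow_const (p := c) (Or.inl hx.ne')).arctan).congr_deriv ?_
  rw [rpow_sub_one hx.ne']
  field_simp

lemma convexOn_mul_arctan_rpow {c : ℝ} (hc : 0 < c) :
    ConvexOn ℝ (Icc 0 1) (fun x : ℝ => x * arctan (x ^ c)) := by
  have hderiv : ∀ x ∈ Ioo (0 : ℝ) 1, deriv (fun x : ℝ => x * arctan (x ^ c)) x =
      arctan (x ^ c) + c * (x ^ c / (1 + (x ^ c) ^ 2)) :=
    fun x hx => (hasDerivAt_mul_arctan_rpow hx.1 c).deriv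
  have hφ : MonotoneOn (fun t : ℝ => arctan t + c * (t / (1 + t ^ 2))) (Icc (-1) 1) :=
    fun s hs t ht hst => add_le_add (arctan_strictMono.monotone hst)
      (mul_le_mul_of_nonneg_left (monotoneOn_div_one_add_sq hs ht hst) hc.le)
  have hpow : MonotoneOn (fun x : ℝ => x ^ c) (Ioo 0 1) :=
    (monotoneOn_rpow_Ici_of_exponent_nonneg hc.le).mono fun _ hx => le_of_lt hx.1
  refine MonotoneOn.convexOn_of_deriv (convex_Icc 0 1) ?_ ?_ ?_
  · exact (continuous_id.mul (continuous_arctan.comp (continuous_rpow_const hc.le))).continuousOn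
  · rw [interior_Icc]
    exact fun x hx => (hasDerivAt_mul_arctan_rpow hx.1 c).differentiableAt.differentiableWithinAt
  · rw [interior_Icc]
    refine (hφ.comp hpow fun x hx => ?_).congr fun x hx => (hderiv x hx).symm
    exact ⟨by linarith [rpow_nonneg hx.1.le c], rpow_le_one hx.1.le hx.2.le hc.le⟩

theorem mul_arctan_rpow_neg_concave (c : ℝ) (hc : 0 < c) :
    ConcaveOn ℝ (Set.Icc (0 : ℝ) 1)
      (fun x : ℝ => x * Real.arctan (x ^ (-c))) := by
  have hlin : ConcaveOn ℝ (Icc (0 : ℝ) 1) (fun x => π / 2 * x) :=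
    (concaveOn_id (convex_Icc 0 1)).smul (by positivity : (0 : ℝ) ≤ π / 2)
  exact (hlin.sub (convexOn_mul_arctan_rpow hc)).congr
    fun x hx => (mul_arctan_rpow_neg_eq hx.1 c).symm
end

section
/- For any probability vector p = (p₁,…,pₙ) and any c > 0, the t-entropy H_c(p) = Σᵢ pᵢ · arctan(1/pᵢ^c) − π/4 is nonnegative (with the convention that terms with pᵢ = 0 contribute 0). -/
/-!
Every `pᵢ` lies in `[0, 1]`, so `pᵢ ^ (-c) ≥ 1` and `arctan (pᵢ ^ (-c)) ≥ arctan 1 = π / 4`;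
averaging with the weights `pᵢ` gives `Σ pᵢ arctan (pᵢ ^ (-c)) ≥ π / 4`.
-/

open Real

/-- The t-entropy of a (generalized) probability vector, with the convention
that a summand with `p i = 0` contributes `0` (automatic since `0 ^ (-c) = 0`
for `c > 0` and `0 * _ = 0`). -/
noncomputable def tEntropy {n : ℕ} (c : ℝ) (p : Fin n → ℝ) : ℝ :=
  (∑ i, p i * Real.arctan ((p i) ^ (-c))) - Real.pi / 4

theorem Real.pi_div_four_le_arctan_rpow_neg {x c : ℝ} (hx₀ : 0 < x) (hx₁ : x ≤ 1) (hc : 0 ≤ c) :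
    π / 4 ≤ arctan (x ^ (-c)) := by
  rw [← arctan_one]
  exact arctan_strictMono.monotone
    (one_le_rpow_of_pos_of_le_one_of_nonpos hx₀ hx₁ (neg_nonpos.mpr hc))

theorem Real.mul_pi_div_four_le_mul_arctan_rpow_neg {x c : ℝ} (hx₀ : 0 ≤ x) (hx₁ : x ≤ 1)
    (hc : 0 ≤ c) : x * (π / 4) ≤ x * arctan (x ^ (-c)) := by
  rcases hx₀.eq_or_lt with rfl | hx₀
  · simp
  · exact mul_le_mul_of_nonneg_left (pi_div_four_le_arctan_rpow_neg hx₀ hx₁ hc) hx₀.le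

theorem tEntropy_nonneg {n : ℕ} (c : ℝ) (hc : 0 < c) (p : Fin n → ℝ)
    (hp : ∀ i, 0 ≤ p i) (hsum : ∑ i, p i = 1) :
    0 ≤ tEntropy c p := by
  have hp₁ (i : Fin n) : p i ≤ 1 :=
    hsum ▸ Finset.single_le_sum (fun j _ => hp j) (Finset.mem_univ i)
  have hmean : ∑ i, p i * (π / 4) ≤ ∑ i, p i * arctan (p i ^ (-c)) :=
    Finset.sum_le_sum fun i _ => mul_pi_div_four_le_mul_arctan_rpow_neg (hp i) (hp₁ i) hc.le
  rw [← Finset.sum_mul, hsum, one_mul] at hmean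
  exact sub_nonneg.mpr hmean
end

section
/- For any c > 0 and any n ≥ 1, the t-entropy H_c over probability vectors of length n is maximized at the uniform vector: for every probability vector p = (p₁,…,pₙ), H_c(p) ≤ H_c(1/n,…,1/n) = arctan(n^c) − π/4. -/
/-!
Each summand of `tEntropy` is `f (pᵢ)` with `f x = x * arctan (x ^ (-c))`, so by Jensen's
inequality with uniform weights it suffices that `f` is concave on `[0, 1]`. There
`f' x = φ (x ^ (-c))` with `φ u = arctan u - c * u / (1 + u ^ 2)`, which is monotone for `u ≥ 1`
because `u / (1 + u ^ 2)` decreases there; since `x ↦ x ^ (-c)` is antitone with values `≥ 1` on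
`(0, 1]`, the derivative `f'` is antitone.
-/

open Real

open Set Filter Topology

theorem ConcaveOn.sum_le_card_mul_map_average {ι : Type*} [Fintype ι] [Nonempty ι]
    {s : Set ℝ} {f : ℝ → ℝ} (hf : ConcaveOn ℝ s f) {p : ι → ℝ} (hp : ∀ i, p i ∈ s) :
    ∑ i, f (p i) ≤ Fintype.card ι * f ((∑ i, p i) / Fintype.card ι) := by
  have hcard : (0 : ℝ) < Fintype.card ι := by exact_mod_cast Fintype.card_pos
  have hweights : ∑ _i : ι, (Fintype.card ι : ℝ)⁻¹ = 1 := by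
    simp [Finset.card_univ, hcard.ne']
  have hjensen := hf.le_map_sum (t := Finset.univ) (fun _ _ => inv_nonneg.mpr hcard.le)
    hweights (fun i _ => hp i)
  simp only [smul_eq_mul, ← Finset.mul_sum] at hjensen
  rw [div_eq_inv_mul]
  calc ∑ i, f (p i) = Fintype.card ι * ((Fintype.card ι : ℝ)⁻¹ * ∑ i, f (p i)) :=
        (mul_inv_cancel_left₀ hcard.ne' _).symm
    _ ≤ _ := by gcongr

theorem antitoneOn_div_one_add_sq : AntitoneOn (fun u : ℝ => u / (1 + u ^ 2)) (Ici 1) := by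
  intro u hu v hv huv
  simp only [mem_Ici] at hu hv
  rw [div_le_div_iff₀ (by positivity) (by positivity)]
  nlinarith [mul_nonneg (sub_nonneg.mpr huv) (by nlinarith : (0 : ℝ) ≤ u * v - 1)]

theorem continuous_mul_arctan_rpow_neg (c : ℝ) :
    Continuous fun x : ℝ => x * arctan (x ^ (-c)) := by
  rw [continuous_iff_continuousAt]
  intro x
  rcases eq_or_ne x 0 with rfl | hx
  · have harctan_bdd : IsBoundedUnder (· ≤ ·) (𝓝 0) ((‖·‖) ∘ fun x : ℝ => arctan (x ^ (-c))) :=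
      isBoundedUnder_of ⟨π / 2, fun y => abs_le.mpr
        ⟨(neg_pi_div_two_lt_arctan _).le, (arctan_lt_pi_div_two _).le⟩⟩
    simpa [ContinuousAt] using tendsto_id.zero_mul_isBoundedUnder_le harctan_bdd
  · exact continuousAt_id.mul
      (continuous_arctan.continuousAt.comp (continuousAt_rpow_const _ _ (Or.inl hx)))

theorem hasDerivAt_mul_arctan_rpow_neg (c : ℝ) {x : ℝ} (hx : 0 < x) :
    HasDerivAt (fun x : ℝ => x * arctan (x ^ (-c)))
      (arctan (x ^ (-c)) - c * x ^ (-c) / (1 + (x ^ (-c)) ^ 2)) x := by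
  refine ((hasDerivAt_id x).mul
    (hasDerivAt_rpow_const (p := -c) (Or.inl hx.ne')).arctan).congr_deriv ?_
  rw [id, rpow_sub_one hx.ne']
  field_simp
  ring

theorem antitoneOn_deriv_mul_arctan_rpow_neg {c : ℝ} (hc : 0 ≤ c) :
    AntitoneOn (fun x : ℝ => arctan (x ^ (-c)) - c * x ^ (-c) / (1 + (x ^ (-c)) ^ 2))
      (Ioc 0 1) := by
  intro x hx y hy hxy
  have hneg : -c ≤ 0 := neg_nonpos.mpr hc
  have hyx : y ^ (-c) ≤ x ^ (-c) := rpow_le_rpow_of_nonpos hx.1 hxy hneg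
  have hy1 : 1 ≤ y ^ (-c) := one_le_rpow_of_pos_of_le_one_of_nonpos hy.1 hy.2 hneg
  have hfrac := antitoneOn_div_one_add_sq (mem_Ici.mpr hy1) (mem_Ici.mpr (hy1.trans hyx)) hyx
  have harctan := arctan_strictMono.monotone hyx
  simp only [mul_div_assoc]
  nlinarith [mul_le_mul_of_nonneg_left hfrac hc]

theorem concaveOn_mul_arctan_rpow_neg {c : ℝ} (hc : 0 ≤ c) :
    ConcaveOn ℝ (Icc 0 1) fun x : ℝ => x * arctan (x ^ (-c)) := by
  refine AntitoneOn.concaveOn_of_deriv (convex_Icc 0 1)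
    (continuous_mul_arctan_rpow_neg c).continuousOn ?_ ?_ <;> rw [interior_Icc]
  · exact fun x hx =>
      (hasDerivAt_mul_arctan_rpow_neg c hx.1).differentiableAt.differentiableWithinAt
  · intro x hx y hy hxy
    rw [(hasDerivAt_mul_arctan_rpow_neg c hx.1).deriv,
      (hasDerivAt_mul_arctan_rpow_neg c hy.1).deriv]
    exact antitoneOn_deriv_mul_arctan_rpow_neg hc (Ioo_subset_Ioc_self hx)
      (Ioo_subset_Ioc_self hy) hxy

theorem tEntropy_uniform {n : ℕ} (hn : n ≠ 0) (c : ℝ) :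
    tEntropy c (fun _ : Fin n => (1 : ℝ) / n) = arctan ((n : ℝ) ^ c) - π / 4 := by
  have hpow : (n : ℝ)⁻¹ ^ (-c) = (n : ℝ) ^ c := by
    rw [inv_rpow n.cast_nonneg, rpow_neg n.cast_nonneg, inv_inv]
  simp [tEntropy, hpow, hn]

theorem tEntropy_le_uniform {n : ℕ} (hn : 1 ≤ n) (c : ℝ) (hc : 0 < c)
    (p : Fin n → ℝ) (hp : ∀ i, 0 ≤ p i) (hsum : ∑ i, p i = 1) :
    tEntropy c p ≤ tEntropy c (fun _ : Fin n => (1 : ℝ) / n) ∧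
    tEntropy c (fun _ : Fin n => (1 : ℝ) / n) =
      Real.arctan ((n : ℝ) ^ c) - Real.pi / 4 := by
  have : NeZero n := ⟨Nat.one_le_iff_ne_zero.mp hn⟩
  have hp_le_one (i : Fin n) : p i ≤ 1 :=
    hsum ▸ Finset.single_le_sum (fun j _ => hp j) (Finset.mem_univ i)
  have hjensen := (concaveOn_mul_arctan_rpow_neg hc.le).sum_le_card_mul_map_average
    (fun i => ⟨hp i, hp_le_one i⟩)
  rw [hsum, Fintype.card_fin] at hjensen
  refine ⟨sub_le_sub_right (hjensen.trans_eq ?_) _, tEntropy_uniform (NeZero.ne n) c⟩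
  simp
end

section
/- For every ε ∈ (0, 1/2), the inequality επ/2 + (1−ε)·arctan(1−ε) < (1−ε)·π/2 + ε·arctan(ε) holds. -/
/-!
Since `π / 2 - arctan t = arctan t⁻¹` for `t > 0`, the inequality says `g ε < g (1 - ε)` for
`g t = t * (π / 2 - arctan t)`. Its derivative `arctan t⁻¹ - t / (1 + t ^ 2)` is positive, because
`s / (1 + s ^ 2) < arctan s` for `s > 0` by the mean value theorem, and `ε < 1 - ε`.
-/

open Real Set

lemma div_one_add_sq_lt_arctan {x : ℝ} (hx : 0 < x) : x / (1 + x ^ 2) < arctan x := by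
  obtain ⟨c, ⟨hc0, hcx⟩, hc⟩ := exists_hasDerivAt_eq_slope arctan (fun t ↦ 1 / (1 + t ^ 2)) hx
    continuous_arctan.continuousOn fun t _ ↦ hasDerivAt_arctan t
  rw [arctan_zero, sub_zero, sub_zero, eq_div_iff hx.ne'] at hc
  rw [← hc, div_eq_mul_one_div, mul_comm]
  gcongr

lemma strictMonoOn_mul_pi_div_two_sub_arctan :
    StrictMonoOn (fun t ↦ t * (π / 2 - arctan t)) (Ioi 0) := by
  refine strictMonoOn_of_hasDerivWithinAt_pos (convex_Ioi 0)
    (by fun_prop) (fun t _ ↦ ((hasDerivAt_id t).mul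
      ((hasDerivAt_arctan t).const_sub (π / 2))).hasDerivWithinAt) fun t ht ↦ ?_
  rw [interior_Ioi, mem_Ioi] at ht
  have h := div_one_add_sq_lt_arctan (inv_pos.2 ht)
  rw [arctan_inv_of_pos ht] at h
  have hinv : t⁻¹ / (1 + t⁻¹ ^ 2) = t * (1 / (1 + t ^ 2)) := by field_simp; ring
  simp only [id, one_mul, mul_neg]
  linarith

theorem breakdown_inequality (ε : ℝ) (h0 : 0 < ε) (h1 : ε < 1 / 2) :
    ε * Real.pi / 2 + (1 - ε) * Real.arctan (1 - ε) <
      (1 - ε) * Real.pi / 2 + ε * Real.arctan ε := by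
  have h := strictMonoOn_mul_pi_div_two_sub_arctan (mem_Ioi.2 h0)
    (mem_Ioi.2 (by linarith : (0 : ℝ) < 1 - ε)) (by linarith)
  linarith
end
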